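/- Every infinite word over a finite alphabet with bounded abelian complexity contains an abelian k-power for every k ≥ 1. -/

import Mathlib

def parikh {t : ℕ} (ω : ℕ → Fin t) (a n : ℕ) : Fin t → ℕ :=
  fun c => ((Finset.range n).filter (fun i => ω (a + i) = c)).card

noncomputable def abelianComplexity {t : ℕ} (ω : ℕ → Fin t) (n : ℕ) : ℕ :=
  {v : Fin t → ℕ | ∃ a : ℕ, parikh ω a n = v}.ncard

lemma parikh_succ {t : ℕ} (ω : ℕ → Fin t) (x s : ℕ) (c : Fin t) :
    parikh ω x (s + 1) c = parikh ω x s c + (if ω (x + s) = c then 1 else 0) := by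
  unfold parikh
  rw [Finset.range_add_one, Finset.filter_insert]
  split_ifs with h
  · rw [Finset.card_insert_of_notMem (by simp)]
  · simp

lemma parikh_add {t : ℕ} (ω : ℕ → Fin t) (x u s : ℕ) (c : Fin t) :
    parikh ω x (u + s) c = parikh ω x u c + parikh ω (x + u) s c := by
  induction s with
  | zero => simp [parikh]
  | succ n ih =>
    have h1 : u + (n + 1) = (u + n) + 1 := by omega
    rw [h1, parikh_succ, ih, parikh_succ]
    have h2 : x + (u + n) = (x + u) + n := by omega
    rw [h2, Nat.add_assoc]

lemma parikh_le {t : ℕ} (ω : ℕ → Fin t) (x s : ℕ) (c : Fin t) :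
    parikh ω x s c ≤ s := by
  calc parikh ω x s c ≤ (Finset.range s).card := Finset.card_filter_le _ _
  _ = s := Finset.card_range s

lemma parikh_slide {t : ℕ} (ω : ℕ → Fin t) (x s : ℕ) (c : Fin t) :
    parikh ω (x + 1) s c ≤ parikh ω x s c + 1 ∧
      parikh ω x s c ≤ parikh ω (x + 1) s c + 1 := by
  have h1 := parikh_add ω x 1 s c
  have h2 := parikh_succ ω x s c
  have h3 : parikh ω x 1 c ≤ 1 := parikh_le ω x 1 c
  rw [Nat.add_comm 1 s] at h1
  have h4 : (if ω (x + s) = c then 1 else 0) ≤ 1 := by split <;> omega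
  omega

/-- discrete intermediate value theorem -/
lemma ivt (g : ℕ → ℕ) (hg : ∀ z, g (z + 1) ≤ g z + 1 ∧ g z ≤ g (z + 1) + 1)
    (x d q : ℕ)
    (h : (g x ≤ q ∧ q ≤ g (x + d)) ∨ (g (x + d) ≤ q ∧ q ≤ g x)) :
    ∃ z ≤ d, g (x + z) = q := by
  induction d with
  | zero =>
    rw [Nat.add_zero] at h
    exact ⟨0, le_refl _, by rw [Nat.add_zero]; omega⟩
  | succ n ih =>
    by_cases h' : (g x ≤ q ∧ q ≤ g (x + n)) ∨ (g (x + n) ≤ q ∧ q ≤ g x)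
    · obtain ⟨z, hz, hgz⟩ := ih h'
      exact ⟨z, by omega, hgz⟩
    · have hs := hg (x + n)
      have he : x + (n + 1) = (x + n) + 1 := by omega
      rw [he] at h
      exact ⟨n + 1, le_refl _, by rw [he]; omega⟩

lemma parikh_set_finite {t : ℕ} (ω : ℕ → Fin t) (n : ℕ) :
    {v : Fin t → ℕ | ∃ a : ℕ, parikh ω a n = v}.Finite := by
  apply Set.Finite.subset (Set.Finite.pi (fun _ : Fin t => Set.finite_Iic n))
  rintro v ⟨a, rfl⟩
  intro c _
  exact parikh_le ω a n c

lemma spread {t : ℕ} (ω : ℕ → Fin t) (M : ℕ)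
    (hρ : ∀ n : ℕ, 1 ≤ n → abelianComplexity ω n ≤ M)
    (s : ℕ) (hs : 1 ≤ s) (c : Fin t) (x y : ℕ) :
    parikh ω x s c < parikh ω y s c + M := by
  have hV : {v : Fin t → ℕ | ∃ a : ℕ, parikh ω a s = v}.Finite := parikh_set_finite ω s
  have hMpos : 1 ≤ M := by
    have h1 : 0 < abelianComplexity ω s := by
      unfold abelianComplexity
      exact (Set.ncard_pos hV).mpr ⟨parikh ω 0 s, 0, rfl⟩
    exact h1.trans_le (hρ s hs)
  by_cases hle : parikh ω x s c ≤ parikh ω y s c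
  · omega
  push_neg at hle
  -- all values between are attained
  have hVc : ((fun v : Fin t → ℕ => v c) '' {v | ∃ a : ℕ, parikh ω a s = v}).Finite :=
    hV.image _
  have hsub : ↑(Finset.Icc (parikh ω y s c) (parikh ω x s c)) ⊆
      (fun v : Fin t → ℕ => v c) '' {v | ∃ a : ℕ, parikh ω a s = v} := by
    intro q hq
    rw [Finset.coe_Icc, Set.mem_Icc] at hq
    have hgs : ∀ z, (fun w => parikh ω w s c) (z + 1) ≤ (fun w => parikh ω w s c) z + 1 ∧
        (fun w => parikh ω w s c) z ≤ (fun w => parikh ω w s c) (z + 1) + 1 :=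
      fun z => parikh_slide ω z s c
    have hbeta : ∀ w, (fun w => parikh ω w s c) w = parikh ω w s c := fun _ => rfl
    rcases le_total x y with hxy | hxy
    · obtain ⟨z, _, hz⟩ := ivt (fun w => parikh ω w s c) hgs x (y - x) q
        (by rw [show x + (y - x) = y by omega]; omega)
      exact ⟨parikh ω (x + z) s, ⟨x + z, rfl⟩, hz⟩
    · obtain ⟨z, _, hz⟩ := ivt (fun w => parikh ω w s c) hgs y (x - y) q
        (by rw [show y + (x - y) = x by omega]; omega)
      exact ⟨parikh ω (y + z) s, ⟨y + z, rfl⟩, hz⟩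
  have hcard : (Finset.Icc (parikh ω y s c) (parikh ω x s c)).card ≤ M := by
    calc (Finset.Icc (parikh ω y s c) (parikh ω x s c)).card
        = (↑(Finset.Icc (parikh ω y s c) (parikh ω x s c)) : Set ℕ).ncard := by
          rw [Set.ncard_coe_finset]
      _ ≤ ((fun v : Fin t → ℕ => v c) '' {v | ∃ a : ℕ, parikh ω a s = v}).ncard :=
          Set.ncard_le_ncard hsub hVc
      _ ≤ ({v : Fin t → ℕ | ∃ a : ℕ, parikh ω a s = v}).ncard := Set.ncard_image_le hV
      _ ≤ M := hρ s hs
  rw [Nat.card_Icc] at hcard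
  omega

/-- Every word of bounded abelian complexity contains an abelian `k`-power for all `k ≥ 1`. -/
theorem stmt12 (t : ℕ) (ω : ℕ → Fin t) (M : ℕ)
    (hρ : ∀ n : ℕ, 1 ≤ n → abelianComplexity ω n ≤ M) :
    ∀ k : ℕ, 1 ≤ k → ∃ a s : ℕ, 1 ≤ s ∧
      ∀ i < k, parikh ω (a + i * s) s = parikh ω a s := by
  intro k hk
  have hM : 1 ≤ M := by
    have h1 : 0 < abelianComplexity ω 1 :=
      (Set.ncard_pos (parikh_set_finite ω 1)).mpr ⟨parikh ω 0 1, 0, rfl⟩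
    exact h1.trans_le (hρ 1 le_rfl)
  set m := 2 * M with hmdef
  have hm0 : 0 < m := by omega
  let C : ℕ → (Fin t → Fin m) := fun n c => ⟨parikh ω 0 n c % m, Nat.mod_lt _ hm0⟩
  obtain ⟨a, ha, b, c₀, hmono⟩ := Combinatorics.exists_mono_homothetic_copy (Finset.range (k + 1)) C
  refine ⟨b, a, ha, ?_⟩
  intro i hi
  funext c
  have hg : ∀ j ≤ k, parikh ω 0 (b + j * a) c % m = (c₀ c).1 := by
    intro j hj
    have h1 := hmono j (Finset.mem_range.mpr (by omega))
    have h2 := congrArg Fin.val (congrFun h1 c)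
    have h3 : a • j + b = b + j * a := by simp [smul_eq_mul]; ring
    rw [h3] at h2
    exact h2
  have hdvd : ∀ j < k, m ∣ parikh ω (b + j * a) a c := by
    intro j hj
    have hadd := parikh_add ω 0 (b + j * a) a c
    rw [Nat.zero_add] at hadd
    have h1 := hg j (by omega)
    have h2 := hg (j + 1) (by omega)
    rw [show b + (j + 1) * a = b + j * a + a by ring] at h2
    rw [hadd] at h2
    have hmodeq : Nat.ModEq m (parikh ω 0 (b + j * a) c)
        (parikh ω 0 (b + j * a) c + parikh ω (b + j * a) a c) := h1.trans h2.symm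
    have := (Nat.modEq_iff_dvd' (Nat.le_add_right _ _)).mp hmodeq
    rwa [Nat.add_sub_cancel_left] at this
  have d0 := hdvd 0 (by omega)
  have di := hdvd i hi
  rw [show b + 0 * a = b by ring] at d0
  have hs1 := spread ω M hρ a ha c (b + i * a) b
  have hs2 := spread ω M hρ a ha c b (b + i * a)
  have hd1 : parikh ω (b + i * a) a c - parikh ω b a c = 0 :=
    Nat.eq_zero_of_dvd_of_lt (Nat.dvd_sub di d0) (by omega)
  have hd2 : parikh ω b a c - parikh ω (b + i * a) a c = 0 :=
    Nat.eq_zero_of_dvd_of_lt (Nat.dvd_sub d0 di) (by omega)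
  omega
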